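/- In three variables, the identity (3 M_4 - M_2^2)(M_2^3 - 5 M_2 M_4 + 6 M_6) = 4(x^2 (x^2 - y^2)^2 (x^2 - z^2)^2 + y^2 (y^2 - x^2)^2 (y^2 - z^2)^2 + z^2 (z^2 - x^2)^2 (z^2 - y^2)^2) holds; in particular, the left-hand side is a sum of squares of forms when n = 3. -/

import Mathlib

open MvPolynomial Finset

noncomputable def M3 (r : ℕ) : MvPolynomial (Fin 3) ℝ := X 0 ^ r + X 1 ^ r + X 2 ^ r

def IsSosForms {n : ℕ} (f : MvPolynomial (Fin n) ℝ) : Prop :=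
  ∃ (k : ℕ) (h : Fin k → MvPolynomial (Fin n) ℝ),
    (∀ i, ∃ d, (h i).IsHomogeneous d) ∧ f = ∑ i, h i ^ 2

lemma isHomogeneous_X_sq_sub_X_sq {σ R : Type*} [CommRing R] (i j : σ) :
    (X i ^ 2 - X j ^ 2 : MvPolynomial σ R).IsHomogeneous 2 :=
  ((isHomogeneous_X R i).pow 2).sub ((isHomogeneous_X R j).pow 2)

/-- Addition in `Fin 3` wraps around, so `i + 1` and `i + 2` are the two indices other than `i`. -/
noncomputable def sosQuintic (i : Fin 3) : MvPolynomial (Fin 3) ℝ :=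
  2 * X i * (X i ^ 2 - X (i + 1) ^ 2) * (X i ^ 2 - X (i + 2) ^ 2)

lemma isHomogeneous_sosQuintic (i : Fin 3) : (sosQuintic i).IsHomogeneous 5 :=
  (((isHomogeneous_C (Fin 3) (2 : ℝ)).mul (isHomogeneous_X ℝ i)).mul
    (isHomogeneous_X_sq_sub_X_sq i (i + 1))).mul (isHomogeneous_X_sq_sub_X_sq i (i + 2))

lemma sum_sosQuintic_sq :
    ∑ i, sosQuintic i ^ 2 =
      4 * (X 0 ^ 2 * (X 0 ^ 2 - X 1 ^ 2) ^ 2 * (X 0 ^ 2 - X 2 ^ 2) ^ 2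
        + X 1 ^ 2 * (X 1 ^ 2 - X 0 ^ 2) ^ 2 * (X 1 ^ 2 - X 2 ^ 2) ^ 2
        + X 2 ^ 2 * (X 2 ^ 2 - X 0 ^ 2) ^ 2 * (X 2 ^ 2 - X 1 ^ 2) ^ 2) := by
  simp only [Fin.sum_univ_three, sosQuintic, Fin.isValue, Fin.reduceAdd]
  ring

theorem P3_identity_and_sos :
    ((3 * M3 4 - (M3 2) ^ 2) * ((M3 2) ^ 3 - 5 * M3 2 * M3 4 + 6 * M3 6) =
        4 * (X 0 ^ 2 * (X 0 ^ 2 - X 1 ^ 2) ^ 2 * (X 0 ^ 2 - X 2 ^ 2) ^ 2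
          + X 1 ^ 2 * (X 1 ^ 2 - X 0 ^ 2) ^ 2 * (X 1 ^ 2 - X 2 ^ 2) ^ 2
          + X 2 ^ 2 * (X 2 ^ 2 - X 0 ^ 2) ^ 2 * (X 2 ^ 2 - X 1 ^ 2) ^ 2)) ∧
      IsSosForms ((3 * M3 4 - (M3 2) ^ 2) * ((M3 2) ^ 3 - 5 * M3 2 * M3 4 + 6 * M3 6)) := by
  have identity : (3 * M3 4 - (M3 2) ^ 2) * ((M3 2) ^ 3 - 5 * M3 2 * M3 4 + 6 * M3 6) =
      4 * (X 0 ^ 2 * (X 0 ^ 2 - X 1 ^ 2) ^ 2 * (X 0 ^ 2 - X 2 ^ 2) ^ 2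
        + X 1 ^ 2 * (X 1 ^ 2 - X 0 ^ 2) ^ 2 * (X 1 ^ 2 - X 2 ^ 2) ^ 2
        + X 2 ^ 2 * (X 2 ^ 2 - X 0 ^ 2) ^ 2 * (X 2 ^ 2 - X 1 ^ 2) ^ 2) := by
    simp only [M3]
    ring
  refine ⟨identity, 3, sosQuintic, fun i => ⟨5, isHomogeneous_sosQuintic i⟩, ?_⟩
  rw [identity, sum_sosQuintic_sq]
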